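/- For every closed PGA term P, there exist a finite guarded recursive specification E over BTA in which no internal actions occur (basic actions being the basic instructions of PGA) and a variable X of E such that the thread |P| extracted from P is the X-component of the unique solution of E in the projective limit model; in particular, the thread produced by any closed PGA term is a finite-state thread. -/
import Mathlib


inductive FinThread (A : Type) : Type where
  | dead : FinThread A
  | term : FinThread A
  | pcc : FinThread A → A → FinThread A → FinThread A

namespace FinThread
def proj {A : Type} : ℕ → FinThread A → FinThread A
  | 0, _ => .dead
  | _ + 1, .dead => .dead
  | _ + 1, .term => .term
  | n + 1, .pcc x a y => .pcc (proj n x) a (proj n y)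
end FinThread

structure Thread (A : Type) : Type where
  approx : ℕ → FinThread A
  coh : ∀ n, FinThread.proj n (approx (n + 1)) = approx n

/-- One step of behaviour over a state space `S`: inaction, termination, or
performing an action `a` with a state for the positive and one for the
negative reply. -/
inductive Step (A S : Type) : Type where
  | dead : Step A S
  | term : Step A S
  | node : S → A → S → Step A S

def stepApply {A S : Type} (g : S → FinThread A) : Step A S → FinThread A
  | .dead => .dead
  | .term => .term
  | .node s1 a s2 => .pcc (g s1) a (g s2)

/-- Approximations up to a given depth of the behaviour of a coalgebra. -/
def unfoldAux {A S : Type} (f : S → Step A S) : ℕ → S → FinThread A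
  | 0, _ => .dead
  | n + 1, s => stepApply (unfoldAux f n) (f s)

theorem proj_unfoldAux {A S : Type} (f : S → Step A S) :
    ∀ (n : ℕ) (s : S), FinThread.proj n (unfoldAux f (n + 1) s) = unfoldAux f n s := by
  intro n
  induction n with
  | zero => intro s; rfl
  | succ n ih =>
    intro s
    show FinThread.proj (n + 1) (stepApply (unfoldAux f (n + 1)) (f s)) =
      stepApply (unfoldAux f n) (f s)
    cases h : f s <;> simp [stepApply, FinThread.proj, ih]

/-- The thread (element of the projective limit model) produced by a state of
a coalgebra. -/
def Thread.unfold {A S : Type} (f : S → Step A S) (s : S) : Thread A :=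
  ⟨fun n => unfoldAux f n s, fun n => proj_unfoldAux f n s⟩

namespace Thread

/-- Inaction D, lifted componentwise to the projective limit model. -/
def dead (A : Type) : Thread A :=
  ⟨fun _ => .dead, by intro n; cases n <;> rfl⟩

/-- Termination S, lifted componentwise to the projective limit model. -/
def term (A : Type) : Thread A :=
  ⟨fun n => match n with | 0 => .dead | _ + 1 => .term,
   by intro n; cases n <;> rfl⟩

/-- Postconditional composition, lifted componentwise (cutting each component
to the appropriate depth) to the projective limit model. -/
def pcc {A : Type} (x : Thread A) (a : A) (y : Thread A) : Thread A where
  approx := fun n => match n with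
    | 0 => .dead
    | n + 1 => .pcc (x.approx n) a (y.approx n)
  coh := by
    intro n
    cases n with
    | zero => rfl
    | succ n =>
      show FinThread.proj (n + 1) (.pcc (x.approx (n + 1)) a (y.approx (n + 1))) =
        FinThread.pcc (x.approx n) a (y.approx n)
      simp [FinThread.proj, x.coh n, y.coh n]

end Thread
/-- Terms over a set `V` of variables for the right-hand sides of guarded
recursive specifications over BTA: built from D, S, postconditional
composition and variables. -/
inductive SpecTerm (A V : Type) : Type where
  | dead : SpecTerm A V
  | term : SpecTerm A V
  | var : V → SpecTerm A V
  | pcc : SpecTerm A V → A → SpecTerm A V → SpecTerm A V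

namespace SpecTerm

/-- Evaluation of a specification term in the projective limit model under an
assignment of threads to variables. -/
def eval {A V : Type} (ρ : V → Thread A) : SpecTerm A V → Thread A
  | .dead => Thread.dead A
  | .term => Thread.term A
  | .var X => ρ X
  | .pcc t a t' => Thread.pcc (t.eval ρ) a (t'.eval ρ)

end SpecTerm

/-- A recursive specification `E = {X = t_X | X ∈ V}` is guarded if each
right-hand side is of the form D, S, or `t ⊴ a ⊵ t'`. -/
def Guarded {A V : Type} (E : V → SpecTerm A V) : Prop :=
  ∀ X, E X = .dead ∨ E X = .term ∨ ∃ t a t', E X = .pcc t a t'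

/-- `ρ` is a solution of the recursive specification `E` in the projective
limit model. -/
def IsSolution {A V : Type} (E : V → SpecTerm A V) (ρ : V → Thread A) : Prop :=
  ∀ X, ρ X = (E X).eval ρ


inductive PrimInstr (B : Type) : Type where
  | basic : B → PrimInstr B
  | postest : B → PrimInstr B
  | negtest : B → PrimInstr B
  | jump : ℕ → PrimInstr B
  | halt : PrimInstr B

inductive PGA (I : Type) : Type where
  | instr : I → PGA I
  | concat : PGA I → PGA I → PGA I
  | rep : PGA I → PGA I

def InstrSeq (I : Type) : Type := List I ⊕ (ℕ → I)

namespace PGA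
def den {I : Type} : PGA I → InstrSeq I
  | .instr u => Sum.inl [u]
  | .concat P Q =>
    match P.den with
    | Sum.inl l =>
      match Q.den with
      | Sum.inl l' => Sum.inl (l ++ l')
      | Sum.inr f => Sum.inr (fun n => if n < l.length then l.getD n (f 0) else f (n - l.length))
    | Sum.inr f => Sum.inr f
  | .rep P =>
    match P.den with
    | Sum.inl [] => Sum.inl []
    | Sum.inl (a :: l) => Sum.inr (fun n => (a :: l).getD (n % (a :: l).length) a)
    | Sum.inr f => Sum.inr f
end PGA

/-- The instruction at each position (0-based) of an instruction sequence,
`none` past the end of a finite sequence. -/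
def InstrSeq.toFun {I : Type} : InstrSeq I → ℕ → Option I
  | Sum.inl l, n => l[n]?
  | Sum.inr f, n => some (f n)

section Chase
variable {I : Type} (jmp : I → Option ℕ) (s : ℕ → Option I)

/-- The target of the strict forward jump (if any) at position `i`. -/
def jumpTarget (i : ℕ) : Option ℕ :=
  match s i with
  | some u =>
    match jmp u with
    | some (l + 1) => some (i + (l + 1))
    | _ => none
  | none => none

/-- Iterated jump-following from position `i` (stabilising at non-jumps). -/
def chaseIter (i : ℕ) : ℕ → ℕ
  | 0 => i
  | k + 1 =>
    match jumpTarget jmp s (chaseIter i k) with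
    | some j => j
    | none => chaseIter i k

/-- Follow the chain of strict forward jumps from position `i`; `none` when
`i` begins an infinite chain of forward jumps. -/
noncomputable def chase (i : ℕ) : Option ℕ := by
  classical
  exact if h : ∃ k, jumpTarget jmp s (chaseIter jmp s i k) = none then
    some (chaseIter jmp s i (Nat.find h)) else none

end Chase

def PrimInstr.jmp {B : Type} : PrimInstr B → Option ℕ
  | .jump l => some l
  | _ => none


/-- The one-step behaviour of the instruction sequence `s` at position `i`. -/
noncomputable def extrStep {B : Type} (s : ℕ → Option (PrimInstr B)) (i : ℕ) :
    Step B ℕ :=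
  match chase PrimInstr.jmp s i with
  | none => .dead
  | some j =>
    match s j with
    | none => .dead
    | some (.basic a) => .node (j + 1) a (j + 1)
    | some (.postest a) => .node (j + 1) a (j + 2)
    | some (.negtest a) => .node (j + 2) a (j + 1)
    | some (.jump _) => .dead
    | some .halt => .term

/-- Thread extraction: the thread produced by a closed PGA term on execution. -/
noncomputable def PGA.extract {B : Type} (P : PGA (PrimInstr B)) : Thread B :=
  Thread.unfold (extrStep (InstrSeq.toFun P.den)) 0


section Aux

/-- Map a function over the states of a step. -/
def Step.map' {A S T : Type} (φ : S → T) : Step A S → Step A T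
  | .dead => .dead
  | .term => .term
  | .node s a t => .node (φ s) a (φ t)

theorem unfoldAux_map {A S T : Type} (f : S → Step A S) (g : T → Step A T) (φ : S → T)
    (h : ∀ s, g (φ s) = Step.map' φ (f s)) :
    ∀ n s, unfoldAux g n (φ s) = unfoldAux f n s := by
  intro n
  induction n with
  | zero => intro s; rfl
  | succ n ih =>
    intro s
    show stepApply (unfoldAux g n) (g (φ s)) = stepApply (unfoldAux f n) (f s)
    rw [h]
    cases f s <;> simp [Step.map', stepApply, ih]

theorem thread_ext {A : Type} {x y : Thread A} (h : ∀ n, x.approx n = y.approx n) :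
    x = y := by
  cases x; cases y
  have : _ = _ := funext h
  simp only at this
  subst this
  rfl

theorem approx_zero {A : Type} (x : Thread A) : x.approx 0 = .dead := by
  have h := x.coh 0
  rw [← h]
  rfl

/-- The guarded recursive specification associated to a coalgebra. -/
def specOf {A V : Type} (g : V → Step A V) : V → SpecTerm A V := fun v =>
  match g v with
  | .dead => .dead
  | .term => .term
  | .node v1 a v2 => .pcc (.var v1) a (.var v2)

theorem specOf_guarded {A V : Type} (g : V → Step A V) : Guarded (specOf g) := by
  intro v
  unfold specOf
  rcases g v with _ | _ | ⟨v1, a, v2⟩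
  · left; rfl
  · right; left; rfl
  · right; right; exact ⟨_, _, _, rfl⟩

theorem unfold_isSolution {A V : Type} (g : V → Step A V) :
    IsSolution (specOf g) (fun v => Thread.unfold g v) := by
  intro v
  apply thread_ext
  intro n
  cases hg : g v with
  | dead =>
    have hs : specOf g v = .dead := by unfold specOf; rw [hg]
    rw [hs]
    cases n with
    | zero => rfl
    | succ n =>
      show stepApply (unfoldAux g n) (g v) = _
      rw [hg]; rfl
  | term =>
    have hs : specOf g v = .term := by unfold specOf; rw [hg]
    rw [hs]
    cases n with
    | zero => rfl
    | succ n =>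
      show stepApply (unfoldAux g n) (g v) = _
      rw [hg]; rfl
  | node v1 a v2 =>
    have hs : specOf g v = .pcc (.var v1) a (.var v2) := by unfold specOf; rw [hg]
    rw [hs]
    cases n with
    | zero => rfl
    | succ n =>
      show stepApply (unfoldAux g n) (g v) = _
      rw [hg]; rfl

theorem solution_unique {A V : Type} (g : V → Step A V) (ρ' : V → Thread A)
    (h : IsSolution (specOf g) ρ') : ρ' = fun v => Thread.unfold g v := by
  have key : ∀ n v, (ρ' v).approx n = unfoldAux g n v := by
    intro n
    induction n with
    | zero => intro v; rw [approx_zero]; rfl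
    | succ n ih =>
      intro v
      rw [h v]
      cases hg : g v with
      | dead =>
        have hs : specOf g v = .dead := by unfold specOf; rw [hg]
        rw [hs]
        show FinThread.dead = stepApply (unfoldAux g n) (g v)
        rw [hg]; rfl
      | term =>
        have hs : specOf g v = .term := by unfold specOf; rw [hg]
        rw [hs]
        show FinThread.term = stepApply (unfoldAux g n) (g v)
        rw [hg]; rfl
      | node v1 a v2 =>
        have hs : specOf g v = .pcc (.var v1) a (.var v2) := by unfold specOf; rw [hg]
        rw [hs]
        show FinThread.pcc ((ρ' v1).approx n) a ((ρ' v2).approx n)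
          = stepApply (unfoldAux g n) (g v)
        rw [hg, ih, ih]; rfl
  funext v
  apply thread_ext
  intro n
  exact key n v

theorem jumpTarget_ge {I : Type} (jmp : I → Option ℕ) (s : ℕ → Option I) (m j : ℕ)
    (h : jumpTarget jmp s m = some j) : m ≤ j := by
  unfold jumpTarget at h
  split at h
  · split at h
    · exact Option.some.inj h ▸ Nat.le_add_right _ _
    · cases h
  · cases h

theorem chaseIter_ge {I : Type} (jmp : I → Option ℕ) (s : ℕ → Option I) (i k : ℕ) :
    i ≤ chaseIter jmp s i k := by
  induction k with
  | zero => exact le_refl i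
  | succ k ih =>
    simp only [chaseIter]
    cases hj : jumpTarget jmp s (chaseIter jmp s i k)
    · exact ih
    case some j => exact le_trans ih (jumpTarget_ge jmp s _ j hj)

theorem chase_ge {I : Type} (jmp : I → Option ℕ) (s : ℕ → Option I) (i j : ℕ)
    (h : chase jmp s i = some j) : i ≤ j := by
  unfold chase at h
  split at h
  · exact Option.some.inj h ▸ chaseIter_ge jmp s i _
  · cases h

section Shift

variable {I : Type} (jmp : I → Option ℕ) (s : ℕ → Option I) (N p : ℕ)
variable (hper : ∀ i, N ≤ i → s (i + p) = s i)

theorem jumpTarget_shift (hper : ∀ i, N ≤ i → s (i + p) = s i) (m : ℕ) (hm : N ≤ m) :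
    jumpTarget jmp s (m + p) = Option.map (· + p) (jumpTarget jmp s m) := by
  unfold jumpTarget
  rw [hper m hm]
  rcases hs : s m with _ | u
  · rfl
  · rcases hj : jmp u with _ | (_ | l) <;> simp [hj]
    omega

theorem chaseIter_shift (hper : ∀ i, N ≤ i → s (i + p) = s i) (i : ℕ) (hi : N ≤ i) (k : ℕ) :
    chaseIter jmp s (i + p) k = chaseIter jmp s i k + p := by
  induction k with
  | zero => rfl
  | succ k ih =>
    simp only [chaseIter, ih]
    rw [jumpTarget_shift jmp s N p hper _ (le_trans hi (chaseIter_ge jmp s i k))]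
    cases jumpTarget jmp s (chaseIter jmp s i k) <;> rfl

theorem chase_shift (hper : ∀ i, N ≤ i → s (i + p) = s i) (i : ℕ) (hi : N ≤ i) :
    chase jmp s (i + p) = Option.map (· + p) (chase jmp s i) := by
  classical
  have hiff : ∀ k, jumpTarget jmp s (chaseIter jmp s (i + p) k) = none ↔
      jumpTarget jmp s (chaseIter jmp s i k) = none := by
    intro k
    rw [chaseIter_shift jmp s N p hper i hi k,
      jumpTarget_shift jmp s N p hper _ (le_trans hi (chaseIter_ge jmp s i k))]
    simp
  unfold chase
  by_cases h : ∃ k, jumpTarget jmp s (chaseIter jmp s i k) = none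
  · have h' : ∃ k, jumpTarget jmp s (chaseIter jmp s (i + p) k) = none := by
      obtain ⟨k, hk⟩ := h
      exact ⟨k, (hiff k).mpr hk⟩
    rw [dif_pos h', dif_pos h]
    have hfind : Nat.find h' = Nat.find h := by
      apply le_antisymm
      · exact Nat.find_le ((hiff _).mpr (Nat.find_spec h))
      · exact Nat.find_le ((hiff _).mp (Nat.find_spec h'))
    rw [hfind, chaseIter_shift jmp s N p hper i hi]
    rfl
  · have h' : ¬ ∃ k, jumpTarget jmp s (chaseIter jmp s (i + p) k) = none := by
      intro ⟨k, hk⟩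
      exact h ⟨k, (hiff k).mp hk⟩
    rw [dif_neg h', dif_neg h]
    rfl

end Shift

/-- The step performed by the instruction at position `j` itself. -/
def atPos {B : Type} (s : ℕ → Option (PrimInstr B)) (j : ℕ) : Step B ℕ :=
  match s j with
  | none => .dead
  | some (.basic a) => .node (j + 1) a (j + 1)
  | some (.postest a) => .node (j + 1) a (j + 2)
  | some (.negtest a) => .node (j + 2) a (j + 1)
  | some (.jump _) => .dead
  | some .halt => .term

theorem extrStep_eq_none {B : Type} (s : ℕ → Option (PrimInstr B)) (i : ℕ)
    (h : chase PrimInstr.jmp s i = none) : extrStep s i = .dead := by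
  unfold extrStep
  rw [h]

theorem extrStep_eq_some {B : Type} (s : ℕ → Option (PrimInstr B)) (i j : ℕ)
    (h : chase PrimInstr.jmp s i = some j) : extrStep s i = atPos s j := by
  unfold extrStep
  rw [h]
  rfl

theorem atPos_shift {B : Type} (s : ℕ → Option (PrimInstr B)) (N p : ℕ)
    (hper : ∀ i, N ≤ i → s (i + p) = s i) (j : ℕ) (hj : N ≤ j) :
    atPos s (j + p) = Step.map' (· + p) (atPos s j) := by
  unfold atPos
  rw [hper j hj]
  cases s j with
  | none => rfl
  | some u =>
    cases u with
    | basic a => show Step.node (j+p+1) a (j+p+1) = Step.node (j+1+p) a (j+1+p); congr 1 <;> omega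
    | postest a =>
      show Step.node (j+p+1) a (j+p+2) = Step.node (j+1+p) a (j+2+p); congr 1 <;> omega
    | negtest a =>
      show Step.node (j+p+2) a (j+p+1) = Step.node (j+2+p) a (j+1+p); congr 1 <;> omega
    | jump l => rfl
    | halt => rfl

theorem extrStep_shift {B : Type} (s : ℕ → Option (PrimInstr B)) (N p : ℕ)
    (hper : ∀ i, N ≤ i → s (i + p) = s i) (i : ℕ) (hi : N ≤ i) :
    extrStep s (i + p) = Step.map' (· + p) (extrStep s i) := by
  cases hc : chase PrimInstr.jmp s i with
  | none =>
    rw [extrStep_eq_none s i hc, extrStep_eq_none s (i + p)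
      (by rw [chase_shift PrimInstr.jmp s N p hper i hi, hc]; rfl)]
    rfl
  | some j =>
    have hj : N ≤ j := le_trans hi (chase_ge _ _ _ _ hc)
    rw [extrStep_eq_some s i j hc, extrStep_eq_some s (i + p) (j + p)
      (by rw [chase_shift PrimInstr.jmp s N p hper i hi, hc]; rfl)]
    exact atPos_shift s N p hper j hj

theorem extrStep_shift_mul {B : Type} (s : ℕ → Option (PrimInstr B)) (N p : ℕ)
    (hper : ∀ i, N ≤ i → s (i + p) = s i) (i : ℕ) (hi : N ≤ i) (k : ℕ) :
    extrStep s (i + k * p) = Step.map' (· + k * p) (extrStep s i) := by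
  induction k with
  | zero =>
    simp only [Nat.zero_mul, Nat.add_zero]
    cases extrStep s i <;> rfl
  | succ k ih =>
    have h1 : i + (k + 1) * p = (i + k * p) + p := by ring
    rw [h1, extrStep_shift s N p hper _ (le_trans hi (Nat.le_add_right _ _)), ih]
    cases extrStep s i with
    | dead => rfl
    | term => rfl
    | node m1 a m2 =>
      show Step.node (m1 + k * p + p) a (m2 + k * p + p)
        = Step.node (m1 + (k + 1) * p) a (m2 + (k + 1) * p)
      congr 1 <;> ring

theorem extrStep_node_ge {B : Type} (s : ℕ → Option (PrimInstr B)) (r m1 m2 : ℕ) (a : B)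
    (h : extrStep s r = .node m1 a m2) : r ≤ m1 ∧ r ≤ m2 := by
  cases hc : chase PrimInstr.jmp s r with
  | none => rw [extrStep_eq_none s r hc] at h; cases h
  | some j =>
    have hj : r ≤ j := chase_ge _ _ _ _ hc
    rw [extrStep_eq_some s r j hc] at h
    unfold atPos at h
    rcases hu : s j with _ | u
    · rw [hu] at h; cases h
    · rw [hu] at h
      cases u with
      | basic b => simp only [Step.node.injEq] at h; omega
      | postest b => simp only [Step.node.injEq] at h; omega
      | negtest b => simp only [Step.node.injEq] at h; omega
      | jump l => simp at h
      | halt => simp at h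

/-- Eventual periodicity of an instruction stream. -/
def EvPeriodic {I : Type} (s : ℕ → Option I) : Prop :=
  ∃ N p, 0 < p ∧ ∀ i, N ≤ i → s (i + p) = s i

theorem evPeriodic_list {I : Type} (l : List I) : EvPeriodic (InstrSeq.toFun (Sum.inl l)) :=
  ⟨l.length, 1, Nat.one_pos, fun i hi => by
    show (l[i + 1]? : Option I) = l[i]?
    rw [List.getElem?_eq_none (by omega), List.getElem?_eq_none (by omega)]⟩

theorem evPeriodic_den {I : Type} (P : PGA I) : EvPeriodic (InstrSeq.toFun P.den) := by
  induction P with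
  | instr u => exact evPeriodic_list [u]
  | concat P Q ihP ihQ =>
    show EvPeriodic (InstrSeq.toFun (PGA.den (P.concat Q)))
    unfold PGA.den
    cases hP : P.den with
    | inl l =>
      cases hQ : Q.den with
      | inl l' => exact evPeriodic_list (l ++ l')
      | inr f =>
        rw [hQ] at ihQ
        obtain ⟨N, p, hp, hper⟩ := ihQ
        have hf : ∀ i, N ≤ i → f (i + p) = f i := by
          intro i hi
          have := hper i hi
          simpa [InstrSeq.toFun] using this
        refine ⟨l.length + N, p, hp, ?_⟩
        intro i hi
        show some (if i + p < l.length then l.getD (i + p) (f 0) else f (i + p - l.length))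
          = some (if i < l.length then l.getD i (f 0) else f (i - l.length))
        rw [if_neg (by omega), if_neg (by omega)]
        have h2 : i + p - l.length = (i - l.length) + p := by omega
        rw [h2, hf (i - l.length) (by omega)]
    | inr f => rw [hP] at ihP; exact ihP
  | rep P ihP =>
    show EvPeriodic (InstrSeq.toFun (PGA.den (P.rep)))
    unfold PGA.den
    cases hP : P.den with
    | inl l =>
      cases l with
      | nil => exact evPeriodic_list []
      | cons a l =>
        refine ⟨0, (a :: l).length, by simp, ?_⟩
        intro i _
        show some ((a :: l).getD ((i + (a :: l).length) % (a :: l).length) a)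
          = some ((a :: l).getD (i % (a :: l).length) a)
        rw [Nat.add_mod_right]
    | inr f => rw [hP] at ihP; exact ihP

end Aux

/-- For every closed PGA term `P` there exist a finite guarded
recursive specification `E` over BTA in which no internal actions occur (the
basic actions being the basic instructions of PGA, i.e. the action type is
`B`) and a variable `X` of `E` such that the thread `|P|` extracted from `P`
is the `X`-component of the unique solution of `E` in the projective limit
model; in particular, the thread produced by any closed PGA term is a
finite-state thread. -/
theorem extract_is_component_of_finite_guarded_spec
    (B : Type) [Finite B] (P : PGA (PrimInstr B)) :
    ∃ (V : Type) (_ : Fintype V) (E : V → SpecTerm B V) (X : V)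
      (ρ : V → Thread B),
      Guarded E ∧ IsSolution E ρ ∧ (∀ ρ', IsSolution E ρ' → ρ' = ρ) ∧
      ρ X = P.extract := by
  classical
  obtain ⟨N, p, hp, hper⟩ := evPeriodic_den P
  set s : ℕ → Option (PrimInstr B) := InstrSeq.toFun P.den with hs
  have hNp : 0 < N + p := by omega
  let φ : ℕ → Fin (N + p) := fun i =>
    if h : i < N then ⟨i, by omega⟩
    else ⟨N + (i - N) % p, by have := Nat.mod_lt (i - N) hp; omega⟩
  let g : Fin (N + p) → Step B (Fin (N + p)) := fun v => Step.map' φ (extrStep s ↑v)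
  have hφ_lt : ∀ i (h : i < N), φ i = ⟨i, by omega⟩ := by
    intro i h; simp only [φ]; rw [dif_pos h]
  have hφ_ge : ∀ i, N ≤ i → φ i = ⟨N + (i - N) % p,
      by have := Nat.mod_lt (i - N) hp; omega⟩ := by
    intro i h; simp only [φ]; rw [dif_neg (by omega)]
  have hφ_mul : ∀ m, N ≤ m → ∀ k, φ (m + k * p) = φ m := by
    intro m hm k
    rw [hφ_ge m hm, hφ_ge (m + k * p) (by omega)]
    apply Fin.ext
    show N + (m + k * p - N) % p = N + (m - N) % p
    rw [Nat.sub_add_comm hm, Nat.add_mul_mod_self_right]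
  have hcomm : ∀ i, g (φ i) = Step.map' φ (extrStep s i) := by
    intro i
    show Step.map' φ (extrStep s ↑(φ i)) = Step.map' φ (extrStep s i)
    by_cases h : i < N
    · rw [hφ_lt i h]
    · push_neg at h
      rw [hφ_ge i h]
      have hrN : N ≤ N + (i - N) % p := Nat.le_add_right _ _
      have hd := Nat.div_add_mod (i - N) p
      have hi_eq : i = (N + (i - N) % p) + ((i - N) / p) * p := by
        calc i = N + (i - N) := by omega
          _ = N + (p * ((i - N) / p) + (i - N) % p) := by rw [hd]
          _ = (N + (i - N) % p) + ((i - N) / p) * p := by ring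
      conv_rhs => rw [hi_eq]
      rw [extrStep_shift_mul s N p hper _ hrN]
      cases hst : extrStep s (↑(⟨N + (i - N) % p, by
          have := Nat.mod_lt (i - N) hp; omega⟩ : Fin (N + p))) with
      | dead => rfl
      | term => rfl
      | node m1 a m2 =>
        simp only [Step.map']
        have hge := extrStep_node_ge s _ m1 m2 a hst
        rw [hφ_mul m1 (le_trans hrN hge.1) ((i - N) / p),
          hφ_mul m2 (le_trans hrN hge.2) ((i - N) / p)]
  refine ⟨Fin (N + p), inferInstance, specOf g, φ 0, fun v => Thread.unfold g v,
    specOf_guarded g, unfold_isSolution g, solution_unique g, ?_⟩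
  apply thread_ext
  intro n
  exact unfoldAux_map (extrStep s) g φ hcomm n 0
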